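/- The Berezin transform of the differentiation operator a(f) = f' on H_β equals ã(w) = βw + conj(w), where ã(w) = ⟨a(k_w), k_w⟩ and k_w(z) = K_β(z,w)/√(K_β(w,w)) is the normalized reproducing kernel. -/

import Mathlib

open MeasureTheory Real Complex

/-- The weight of `H_β`: `exp(-(1+β)x² - (1-β)y²)` for `z = x + iy`. -/
noncomputable def weightB (β : ℝ) (z : ℂ) : ℝ :=
  Real.exp (-((1 + β) * z.re ^ 2 + (1 - β) * z.im ^ 2))

/-- The Bergman kernel `K_β(z,w) = (1/π) exp(β(z² + w̄²)/2) exp(z w̄)`. -/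
noncomputable def Kb (β : ℝ) (z w : ℂ) : ℂ :=
  (1 / (Real.pi : ℂ)) * Complex.exp ((β : ℂ) * (z ^ 2 + (starRingEnd ℂ w) ^ 2) / 2) *
    Complex.exp (z * starRingEnd ℂ w)

/-- The normalized reproducing kernel `k_w = K_β(·,w)/√(K_β(w,w))`. -/
noncomputable def kb (β : ℝ) (w z : ℂ) : ℂ :=
  Kb β z w / (Real.sqrt ((Kb β w w).re) : ℂ)

/-!
The derivative of `k_w` is `(βz + w̄) k_w`, and in `|k_w(z)|² e^{-(1+β)x² - (1-β)y²}` the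
β-dependent terms of the exponent cancel, leaving the Gaussian density `e^{-|z-w|²}/π` centred
at `w`. So `ã(w)` is the mean of the affine function `βz + w̄` under this Gaussian, namely
`βw + w̄`.
-/

open ComplexConjugate

lemma integrable_cexp_neg_sq_norm : Integrable fun z : ℂ => cexp (-‖z‖ ^ 2) := by
  simpa using GaussianFourier.integrable_cexp_neg_mul_sq_norm_add (V := ℂ) (b := 1) (by simp) 0 0

lemma integral_cexp_neg_sq_norm : ∫ z : ℂ, cexp (-‖z‖ ^ 2) = π := by
  simpa using GaussianFourier.integral_cexp_neg_mul_sq_norm (V := ℂ) (b := 1) (by simp)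

lemma le_exp_sq_div_two (t : ℝ) : t ≤ rexp (t ^ 2 / 2) := by
  nlinarith [add_one_le_exp (t ^ 2 / 2), sq_nonneg (t - 1)]

lemma integrable_mul_cexp_neg_sq_norm : Integrable fun z : ℂ => z * cexp (-‖z‖ ^ 2) := by
  have hdom : Integrable fun z : ℂ => ‖cexp (-(1 / 2 : ℂ) * ‖z‖ ^ 2)‖ := by
    simpa using (GaussianFourier.integrable_cexp_neg_mul_sq_norm_add (V := ℂ) (b := 1 / 2)
      (by norm_num) 0 0).norm
  refine hdom.mono' (by fun_prop) (Filter.Eventually.of_forall fun z => ?_)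
  have h := mul_le_mul_of_nonneg_right (le_exp_sq_div_two ‖z‖) (exp_pos (-‖z‖ ^ 2)).le
  rw [← Real.exp_add, show ‖z‖ ^ 2 / 2 + -‖z‖ ^ 2 = -(2⁻¹ * ‖z‖ ^ 2) by ring] at h
  simpa [norm_exp, ← ofReal_pow, ← ofReal_neg] using h

lemma integral_mul_cexp_neg_sq_norm : ∫ z : ℂ, z * cexp (-‖z‖ ^ 2) = 0 := by
  have h := integral_neg_eq_self (fun z : ℂ => z * cexp (-‖z‖ ^ 2)) volume
  simp only [norm_neg, neg_mul, integral_neg] at h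
  exact CharZero.eq_neg_self_iff.mp h.symm

lemma integral_affine_mul_cexp_neg_sq_norm_sub (a c w : ℂ) :
    ∫ z : ℂ, (a * z + c) * cexp (-‖z - w‖ ^ 2) = π * (a * w + c) := by
  let f : ℂ → ℂ := fun u => a * (u * cexp (-‖u‖ ^ 2)) + (a * w + c) * cexp (-‖u‖ ^ 2)
  have hf : ∫ u, f u = π * (a * w + c) := by
    rw [integral_add (integrable_mul_cexp_neg_sq_norm.const_mul a)
      (integrable_cexp_neg_sq_norm.const_mul _), integral_const_mul, integral_const_mul,
      integral_mul_cexp_neg_sq_norm, integral_cexp_neg_sq_norm]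
    ring
  rw [← hf, ← integral_sub_right_eq_self f w]
  congr 1 with z
  simp only [f]
  ring

lemma Kb_eq_mul_cexp (β : ℝ) (z w : ℂ) :
    Kb β z w = (π : ℂ)⁻¹ * cexp (β * (z ^ 2 + conj w ^ 2) / 2 + z * conj w) := by
  rw [Kb, mul_assoc, ← Complex.exp_add, one_div]

lemma norm_Kb (β : ℝ) (z w : ℂ) :
    ‖Kb β z w‖ = rexp (β * (z.re ^ 2 - z.im ^ 2 + w.re ^ 2 - w.im ^ 2) / 2
      + (z.re * w.re + z.im * w.im)) / π := by
  rw [Kb_eq_mul_cexp, norm_mul, norm_exp, norm_inv, norm_real, norm_of_nonneg pi_pos.le]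
  simp only [sq, add_re, div_ofNat_re, mul_re, ofReal_re, ofReal_im, conj_re, conj_im]
  ring_nf

lemma re_Kb_self (β : ℝ) (w : ℂ) : (Kb β w w).re = ‖Kb β w w‖ := by
  have him : (β * (w ^ 2 + conj w ^ 2) / 2 + w * conj w).im = 0 := by
    simp only [sq, add_im, div_ofNat_im, mul_im, ofReal_re, ofReal_im, conj_re, conj_im]
    ring
  rw [Kb_eq_mul_cexp, ← ofReal_inv, re_ofReal_mul, exp_re, him, Real.cos_zero, mul_one, norm_mul,
    norm_exp, norm_real, norm_of_nonneg (inv_nonneg.mpr pi_pos.le)]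

lemma hasDerivAt_Kb (β : ℝ) (z w : ℂ) :
    HasDerivAt (fun ζ => Kb β ζ w) ((β * z + conj w) * Kb β z w) z := by
  have hexponent : HasDerivAt (fun ζ : ℂ => β * (ζ ^ 2 + conj w ^ 2) / 2 + ζ * conj w)
      (β * z + conj w) z := by
    have h := ((((hasDerivAt_pow 2 z).add_const (conj w ^ 2)).const_mul (β : ℂ)).div_const 2).add
      ((hasDerivAt_id z).mul_const (conj w))
    exact h.congr_deriv (by simp only [Nat.cast_ofNat, Nat.add_one_sub_one, pow_one]; ring)
  simp only [Kb_eq_mul_cexp]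
  exact (hexponent.cexp.const_mul _).congr_deriv (by ring)

lemma norm_kb (β : ℝ) (w z : ℂ) : ‖kb β w z‖ = ‖Kb β z w‖ / √‖Kb β w w‖ := by
  rw [kb, norm_div, norm_real, norm_of_nonneg (sqrt_nonneg _), re_Kb_self]

lemma sq_norm_kb_mul_weightB (β : ℝ) (w z : ℂ) :
    ‖kb β w z‖ ^ 2 * weightB β z = rexp (-‖z - w‖ ^ 2) / π := by
  rw [norm_kb, div_pow, sq_sqrt (norm_nonneg _), norm_Kb, norm_Kb, weightB, Complex.sq_norm,
    normSq_apply, div_pow, ← Real.exp_nat_mul]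
  field_simp
  rw [← Real.exp_add, ← Real.exp_add]
  congr 1
  simp only [sub_re, sub_im]
  ring

lemma deriv_kb (β : ℝ) (w z : ℂ) :
    deriv (fun ζ => kb β w ζ) z = (β * z + conj w) * kb β w z := by
  simp only [kb]
  rw [((hasDerivAt_Kb β z w).div_const _).deriv, mul_div_assoc]

lemma deriv_kb_mul_conj_mul_weightB (β : ℝ) (w z : ℂ) :
    deriv (fun ζ => kb β w ζ) z * conj (kb β w z) * weightB β z
      = (β * z + conj w) * cexp (-‖z - w‖ ^ 2) / π := by
  have hdensity := congrArg ((↑) : ℝ → ℂ) (sq_norm_kb_mul_weightB β w z)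
  push_cast at hdensity
  rw [deriv_kb, mul_assoc _ (kb β w z), mul_conj', mul_assoc, hdensity, mul_div_assoc]

theorem stmt_17_general (β : ℝ) (w : ℂ) :
    (∫ z : ℂ, deriv (fun ζ => kb β w ζ) z * (starRingEnd ℂ) (kb β w z) *
        (weightB β z : ℂ)) = (β : ℂ) * w + (starRingEnd ℂ) w := by
  simp_rw [deriv_kb_mul_conj_mul_weightB]
  rw [integral_div, integral_affine_mul_cexp_neg_sq_norm_sub,
    mul_div_cancel_left₀ _ (ofReal_ne_zero.mpr pi_ne_zero)]

/-- the Berezin transform of `a(f) = f'` on `H_β` is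
`ã(w) = ⟨a(k_w), k_w⟩ = βw + conj(w)`. -/
theorem stmt_17 (β : ℝ) (hβ0 : 0 ≤ β) (hβ1 : β ≤ 1) (w : ℂ) :
    (∫ z : ℂ, deriv (fun ζ => kb β w ζ) z * (starRingEnd ℂ) (kb β w z) *
        (weightB β z : ℂ)) = (β : ℂ) * w + (starRingEnd ℂ) w :=
  stmt_17_general β w
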